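/- arXiv:1009.4202 — 3 statements merged into one kernel-verified Lean document; each statement's English description precedes it below -/
import Mathlib

section
/- MacMahon's Multiplication Theorem (q = 1 case): for ab-words u of degree n−1 and v of degree m−1, binom(n+m, n) · β(u) · β(v) = β(u·a·v) + β(u·b·v), where β(w) denotes the number of permutations in S_{deg(w)+1} with descent word w. -/
/-- The descent word of a permutation of `Fin N`, as a list of `N−1` booleans:
`false` (= the letter `a`) records an ascent `σᵢ < σᵢ₊₁`, and
`true` (= the letter `b`) records a descent `σᵢ > σᵢ₊₁`. -/
def descWord {N : ℕ} (σ : Equiv.Perm (Fin N)) : List Bool :=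
  List.ofFn fun i : Fin (N - 1) =>
    decide (σ ⟨i.1 + 1, by have := i.2; omega⟩ < σ ⟨i.1, by have := i.2; omega⟩)

/-- `β(w)`: the number of permutations of `S_{deg w + 1}` with descent word `w`. -/
noncomputable def desNum (w : List Bool) : ℕ :=
  Nat.card {σ : Equiv.Perm (Fin (w.length + 1)) // descWord σ = w}

/-!
A permutation `σ` of `Fin (n + m)` is determined by the set `S` of its first `n` values
together with the standardisations `π` of `σ` on the first `n` positions and `ρ` on the last
`m`; as there are `C(n+m, n) · n! · m! = (n + m)!` such triples, each one arises exactly once.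
The descent word of `σ` is that of `π`, one letter at the junction, then that of `ρ`. Hence
the permutations with descent word `u·x·v` for some letter `x` correspond to the triples with
`π` of word `u` and `ρ` of word `v`, and splitting by `x ∈ {a, b}` gives the identity.
-/

open Equiv Finset

section DescentWord

variable {N : ℕ}

lemma length_descWord (σ : Perm (Fin N)) : (descWord σ).length = N - 1 := by
  simp [descWord]

lemma getElem_descWord (σ : Perm (Fin N)) (i : ℕ) (h : i < N - 1) :
    (descWord σ)[i]'(by rw [length_descWord]; omega) =
      decide (σ ⟨i + 1, by omega⟩ < σ ⟨i, by omega⟩) := by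
  simp [descWord]

lemma desNum_eq_card {w : List Bool} (h : w.length + 1 = N) :
    desNum w = Nat.card {σ : Perm (Fin N) // descWord σ = w} := by
  subst h; rfl

end DescentWord

variable {n m : ℕ}

lemma exists_descWord_eq_append_cons (hn : 0 < n) (hm : 0 < m) (σ : Perm (Fin (n + m)))
    (π : Perm (Fin n)) (ρ : Perm (Fin m))
    (hπ : ∀ i j, σ (Fin.castAdd m i) < σ (Fin.castAdd m j) ↔ π i < π j)
    (hρ : ∀ i j, σ (Fin.natAdd n i) < σ (Fin.natAdd n j) ↔ ρ i < ρ j) :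
    ∃ x, descWord σ = descWord π ++ x :: descWord ρ := by
  have hlen : (descWord π).length = n - 1 := length_descWord π
  refine ⟨decide (σ ⟨n, by omega⟩ < σ ⟨n - 1, by omega⟩), List.ext_getElem ?_ ?_⟩
  · simp only [length_descWord, List.length_append, List.length_cons]
    omega
  intro i h _
  have hi : i < n + m - 1 := by rwa [length_descWord] at h
  rw [getElem_descWord _ i hi]
  rcases lt_trichotomy i (n - 1) with hlt | rfl | hgt
  · rw [List.getElem_append_left (by omega), getElem_descWord _ i (by omega)]
    exact decide_eq_decide.mpr (hπ ⟨i + 1, by omega⟩ ⟨i, by omega⟩)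
  · rw [List.getElem_append_right (by omega)]
    simp only [hlen, Nat.sub_self, List.getElem_cons_zero]
    congr 3
    exact Fin.ext (by simp only; omega)
  · rw [List.getElem_append_right (by omega)]
    simp only [hlen, show i - (n - 1) = i - n + 1 by omega, List.getElem_cons_succ]
    rw [getElem_descWord _ (i - n) (by omega)]
    refine decide_eq_decide.mpr (Iff.trans ?_ (hρ _ _))
    simp only [Fin.natAdd_mk, show n + (i - n + 1) = i + 1 by omega, show n + (i - n) = i by omega]

lemma card_compl_eq_of_card_eq {S : Finset (Fin (n + m))} (hS : S.card = n) : Sᶜ.card = m := by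
  rw [card_compl, hS, Fintype.card_fin]
  omega

section Glue

variable (S : Finset (Fin (n + m))) (hS : S.card = n) (π : Perm (Fin n)) (ρ : Perm (Fin m))

/-- The permutation whose first `n` values are the elements of `S`, in the relative order
given by `π`, and whose last `m` values are the elements of `Sᶜ`, in the relative order
given by `ρ`. -/
def glue : Perm (Fin (n + m)) :=
  finSumFinEquiv.symm.trans <| (sumCongr π ρ).trans <|
    (sumCongr (S.orderIsoOfFin hS).toEquiv
      ((Sᶜ).orderIsoOfFin (card_compl_eq_of_card_eq hS)).toEquiv).trans <|
    (sumCongr (Equiv.refl _) (subtypeEquivRight fun _ => mem_compl)).trans (sumCompl (· ∈ S))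

lemma glue_castAdd (i : Fin n) : glue S hS π ρ (Fin.castAdd m i) = S.orderIsoOfFin hS (π i) := by
  simp [glue]

lemma glue_natAdd (j : Fin m) :
    glue S hS π ρ (Fin.natAdd n j) =
      (Sᶜ).orderIsoOfFin (card_compl_eq_of_card_eq hS) (ρ j) := by
  simp [glue]

lemma glue_castAdd_lt_glue_castAdd_iff (i j : Fin n) :
    glue S hS π ρ (Fin.castAdd m i) < glue S hS π ρ (Fin.castAdd m j) ↔ π i < π j := by
  rw [glue_castAdd, glue_castAdd, Subtype.coe_lt_coe, OrderIso.lt_iff_lt]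

lemma glue_natAdd_lt_glue_natAdd_iff (i j : Fin m) :
    glue S hS π ρ (Fin.natAdd n i) < glue S hS π ρ (Fin.natAdd n j) ↔ ρ i < ρ j := by
  rw [glue_natAdd, glue_natAdd, Subtype.coe_lt_coe, OrderIso.lt_iff_lt]

lemma exists_descWord_glue (hn : 0 < n) (hm : 0 < m) :
    ∃ x, descWord (glue S hS π ρ) = descWord π ++ x :: descWord ρ :=
  exists_descWord_eq_append_cons hn hm _ π ρ (glue_castAdd_lt_glue_castAdd_iff S hS π ρ)
    (glue_natAdd_lt_glue_natAdd_iff S hS π ρ)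

lemma range_glue_castAdd : Set.range (fun i => glue S hS π ρ (Fin.castAdd m i)) = S := by
  simp only [glue_castAdd, coe_orderIsoOfFin_apply]
  exact (π.surjective.range_comp (S.orderEmbOfFin hS)).trans (range_orderEmbOfFin S hS)

end Glue

lemma glue_injective :
    Function.Injective
      fun t : (Perm (Fin n) × Perm (Fin m)) × {S : Finset (Fin (n + m)) // S.card = n} =>
      glue t.2.1 t.2.2 t.1.1 t.1.2 := by
  rintro ⟨⟨π, ρ⟩, S, hS⟩ ⟨⟨π', ρ'⟩, T, hT⟩ h
  simp only at h
  obtain rfl : S = T := by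
    apply coe_injective
    rw [← range_glue_castAdd S hS π ρ, ← range_glue_castAdd T hT π' ρ', h]
  have hπ : π = π' := Equiv.ext fun i => by
    simpa [glue_castAdd] using DFunLike.congr_fun h (Fin.castAdd m i)
  have hρ : ρ = ρ' := Equiv.ext fun j => by
    simpa [glue_natAdd] using DFunLike.congr_fun h (Fin.natAdd n j)
  rw [hπ, hρ]

lemma card_perm_prod_perm_prod_subsets :
    Nat.card ((Perm (Fin n) × Perm (Fin m)) × {S : Finset (Fin (n + m)) // S.card = n}) =
      Nat.card (Perm (Fin (n + m))) := by
  rw [Nat.card_prod, Nat.card_prod, Nat.card_perm, Nat.card_perm, Nat.card_perm,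
    Nat.card_eq_fintype_card (α := {S : Finset _ // _}), Fintype.card_finset_len,
    Nat.card_fin, Nat.card_fin, Nat.card_fin, Fintype.card_fin, mul_comm, ← mul_assoc]
  simpa using Nat.choose_mul_factorial_mul_factorial (Nat.le_add_right n m)

/-- Bijective because it is injective between two types with `(n + m)!` elements. -/
noncomputable def glueEquiv :
    (Perm (Fin n) × Perm (Fin m)) × {S : Finset (Fin (n + m)) // S.card = n} ≃
      Perm (Fin (n + m)) :=
  Equiv.ofBijective _ <|
    (Nat.bijective_iff_injective_and_card _).mpr
      ⟨glue_injective, card_perm_prod_perm_prod_subsets⟩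

lemma card_exists_descWord_eq_append_cons {u v : List Bool} (hu : u.length + 1 = n)
    (hv : v.length + 1 = m) :
    Nat.card {σ : Perm (Fin (n + m)) // ∃ x, descWord σ = u ++ x :: v} =
      (n + m).choose n * (Nat.card {π : Perm (Fin n) // descWord π = u} *
        Nat.card {ρ : Perm (Fin m) // descWord ρ = v}) := by
  have hglue : ∀ t, descWord t.1.1 = u ∧ descWord t.1.2 = v ↔
      ∃ x, descWord (glueEquiv (n := n) (m := m) t) = u ++ x :: v := by
    rintro ⟨⟨π, ρ⟩, S, hS⟩
    obtain ⟨y, hy⟩ := exists_descWord_glue S hS π ρ (by omega) (by omega)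
    simp only [glueEquiv, ofBijective_apply, hy]
    constructor
    · rintro ⟨rfl, rfl⟩
      exact ⟨y, rfl⟩
    · rintro ⟨x, hx⟩
      obtain ⟨rfl, hρ⟩ := List.append_inj hx (by rw [length_descWord]; omega)
      exact ⟨rfl, (List.cons.inj hρ).2⟩
  rw [← Nat.card_congr (glueEquiv.subtypeEquiv hglue),
    Nat.card_congr <| (prodSubtypeFstEquivSubtypeProd
        (p := fun πρ : Perm (Fin n) × Perm (Fin m) =>
          descWord πρ.1 = u ∧ descWord πρ.2 = v)).trans
      (prodCongr (subtypeProdEquivProd (p := (descWord · = u)) (q := (descWord · = v)))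
        (.refl _)),
    Nat.card_prod, Nat.card_prod, Nat.card_eq_fintype_card (α := {S : Finset _ // _}),
    Fintype.card_finset_len, Fintype.card_fin, mul_comm]

lemma card_exists_descWord_eq_append_cons_eq_add {N : ℕ} (u v : List Bool) :
    Nat.card {σ : Perm (Fin N) // ∃ x, descWord σ = u ++ x :: v} =
      Nat.card {σ : Perm (Fin N) // descWord σ = u ++ false :: v} +
        Nat.card {σ : Perm (Fin N) // descWord σ = u ++ true :: v} := by
  classical
  have hdisj :
      Disjoint (descWord · = u ++ false :: v) (descWord (N := N) · = u ++ true :: v) := by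
    simp +contextual [Pi.disjoint_iff]
  simp only [Bool.exists_bool, Nat.card_eq_fintype_card]
  exact Fintype.card_subtype_or_disjoint _ _ hdisj

/-- MacMahon's Multiplication Theorem (`q = 1` case): for ab-words `u` of degree
`n−1` and `v` of degree `m−1`,
`C(n+m, n) · β(u) · β(v) = β(u·a·v) + β(u·b·v)`. -/
theorem stmt_7 (u v : List Bool) :
    Nat.choose (u.length + 1 + (v.length + 1)) (u.length + 1) * (desNum u * desNum v) =
      desNum (u ++ false :: v) + desNum (u ++ true :: v) := by
  have hlen (x : Bool) : (u ++ x :: v).length + 1 = u.length + 1 + (v.length + 1) := by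
    simp only [List.length_append, List.length_cons]
    omega
  rw [desNum_eq_card (hlen false), desNum_eq_card (hlen true),
    ← card_exists_descWord_eq_append_cons_eq_add, card_exists_descWord_eq_append_cons rfl rfl]
  rfl
end

section
/- MacMahon's Multiplication Theorem (q-analogue): for ab-words u of degree n−1 and v of degree m−1, [n+m choose n]_q · β_q(u) · β_q(v) = β_q(u·a·v) + β_q(u·b·v), where β_q(w) = ∑ q^{inv(σ)} over permutations σ with descent word w, and [n+m choose n]_q is the Gaussian binomial coefficient. -/
def invNum {N : ℕ} (σ : Equiv.Perm (Fin N)) : ℕ :=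
  (Finset.univ.filter fun p : Fin N × Fin N => p.1 < p.2 ∧ σ p.2 < σ p.1).card

/-- `β_q(w) = ∑ q^{inv σ}` over permutations `σ` with descent word `w`. -/
noncomputable def desPoly (w : List Bool) : Polynomial ℚ :=
  ∑ σ ∈ Finset.univ.filter
      (fun σ : Equiv.Perm (Fin (w.length + 1)) => descWord σ = w),
    Polynomial.X ^ invNum σ

/-- The `q`-factorial `[n]_q! = ∏_{i≤n} (1 + q + ⋯ + q^{i-1})`. -/
noncomputable def qFactorial (n : ℕ) : Polynomial ℚ :=
  ∏ i ∈ Finset.range n, ∑ j ∈ Finset.range (i + 1), Polynomial.X ^ j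

namespace MacMahon

open Finset Polynomial

variable {n m : ℕ}

theorem castAdd_lt_natAdd (i : Fin n) (j : Fin m) : Fin.castAdd m i < Fin.natAdd n j := by
  simp only [Fin.lt_def, Fin.val_castAdd, Fin.val_natAdd]
  omega

theorem card_compl_of_card_eq {A : Finset (Fin (n + m))} (hA : #A = n) : #Aᶜ = m := by
  simp [card_compl, hA]

/-- The permutation taking the first `n` positions onto `A` in the relative order `σ` and the
last `m` positions onto `Aᶜ` in the relative order `τ`. -/
def shufflePerm (A : Finset (Fin (n + m))) (hA : #A = n)
    (σ : Equiv.Perm (Fin n)) (τ : Equiv.Perm (Fin m)) : Equiv.Perm (Fin (n + m)) :=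
  finSumFinEquiv.symm.trans <|
    (Equiv.sumCongr (σ.trans (A.orderIsoOfFin hA).toEquiv)
      (τ.trans ((Aᶜ.orderIsoOfFin (card_compl_of_card_eq hA)).toEquiv.trans
        (Equiv.subtypeEquivRight fun _ => mem_compl)))).trans
      (Equiv.sumCompl (· ∈ A))

def crossInvNum {N : ℕ} (A : Finset (Fin N)) : ℕ := ∑ x ∈ A, #{y ∈ Aᶜ | y < x}

theorem crossInvNum_singleton {N : ℕ} (j : Fin N) : crossInvNum {j} = j := by
  rw [crossInvNum, sum_singleton, ← Fin.card_Iio]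
  congr 1
  ext y
  simp only [mem_filter, mem_compl, mem_singleton, mem_Iio, and_iff_right_iff_imp]
  exact ne_of_lt

theorem invNum_eq_sum {N : ℕ} (σ : Equiv.Perm (Fin N)) :
    invNum σ = ∑ x, ∑ y, if x < y ∧ σ y < σ x then 1 else 0 := by
  rw [invNum, card_filter, Fintype.sum_prod_type]

section shufflePerm

variable (A : Finset (Fin (n + m))) (hA : #A = n) (σ : Equiv.Perm (Fin n))
  (τ : Equiv.Perm (Fin m))

theorem shufflePerm_castAdd (i : Fin n) :
    shufflePerm A hA σ τ (Fin.castAdd m i) = A.orderIsoOfFin hA (σ i) := by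
  simp [shufflePerm]

theorem shufflePerm_natAdd (j : Fin m) :
    shufflePerm A hA σ τ (Fin.natAdd n j) =
      Aᶜ.orderIsoOfFin (card_compl_of_card_eq hA) (τ j) := by
  simp [shufflePerm]

theorem shufflePerm_castAdd_lt_iff (i i' : Fin n) :
    shufflePerm A hA σ τ (Fin.castAdd m i) < shufflePerm A hA σ τ (Fin.castAdd m i') ↔
      σ i < σ i' := by
  rw [shufflePerm_castAdd, shufflePerm_castAdd, Subtype.coe_lt_coe, OrderIso.lt_iff_lt]

theorem shufflePerm_natAdd_lt_iff (j j' : Fin m) :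
    shufflePerm A hA σ τ (Fin.natAdd n j) < shufflePerm A hA σ τ (Fin.natAdd n j') ↔
      τ j < τ j' := by
  rw [shufflePerm_natAdd, shufflePerm_natAdd, Subtype.coe_lt_coe, OrderIso.lt_iff_lt]

theorem image_shufflePerm_castAdd :
    univ.image (fun i => shufflePerm A hA σ τ (Fin.castAdd m i)) = A := by
  refine eq_of_subset_of_card_le ?_ ?_
  · simp [image_subset_iff, shufflePerm_castAdd]
  · rw [card_image_of_injective (f := fun i => shufflePerm A hA σ τ (Fin.castAdd m i)) _
      ((shufflePerm A hA σ τ).injective.comp (Fin.castAdd_injective n m)), card_univ,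
      Fintype.card_fin, hA]

theorem invNum_shufflePerm :
    invNum (shufflePerm A hA σ τ) = invNum σ + invNum τ + crossInvNum A := by
  set π := shufflePerm A hA σ τ
  have left : (∑ i, ∑ i', if Fin.castAdd m i < Fin.castAdd m i' ∧
      π (Fin.castAdd m i') < π (Fin.castAdd m i) then 1 else 0) = invNum σ := by
    simp only [invNum_eq_sum, π, shufflePerm_castAdd_lt_iff, (Fin.strictMono_castAdd m).lt_iff_lt]
  have right : (∑ j, ∑ j', if Fin.natAdd n j < Fin.natAdd n j' ∧
      π (Fin.natAdd n j') < π (Fin.natAdd n j) then 1 else 0) = invNum τ := by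
    simp only [invNum_eq_sum, π, shufflePerm_natAdd_lt_iff, (Fin.strictMono_natAdd n).lt_iff_lt]
  have backward : (∑ j, ∑ i, if Fin.natAdd n j < Fin.castAdd m i ∧
      π (Fin.castAdd m i) < π (Fin.natAdd n j) then 1 else 0) = 0 := by
    simp [(castAdd_lt_natAdd _ _).not_gt]
  have forward : (∑ i, ∑ j, if Fin.castAdd m i < Fin.natAdd n j ∧
      π (Fin.natAdd n j) < π (Fin.castAdd m i) then 1 else 0) = crossInvNum A := by
    simp only [castAdd_lt_natAdd, true_and, π, shufflePerm_castAdd, shufflePerm_natAdd,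
      crossInvNum, card_filter]
    rw [← sum_coe_sort A]
    refine Fintype.sum_equiv (σ.trans (A.orderIsoOfFin hA).toEquiv) _ _ fun i => ?_
    rw [← sum_coe_sort Aᶜ]
    exact Fintype.sum_equiv (τ.trans (Aᶜ.orderIsoOfFin _).toEquiv) _ _ fun j => rfl
  rw [invNum_eq_sum]
  simp only [Fin.sum_univ_add, sum_add_distrib, left, right, backward, forward]
  ring

end shufflePerm

theorem shufflePerm_injective :
    Function.Injective fun t : {A : Finset (Fin (n + m)) // #A = n} × Equiv.Perm (Fin n) ×
      Equiv.Perm (Fin m) => shufflePerm t.1.1 t.1.2 t.2.1 t.2.2 := by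
  rintro ⟨⟨A, hA⟩, σ, τ⟩ ⟨⟨A', hA'⟩, σ', τ'⟩ h
  dsimp only at h
  obtain rfl : A = A' := by
    rw [← image_shufflePerm_castAdd A hA σ τ, h, image_shufflePerm_castAdd]
  have hσ : σ = σ' := Equiv.ext fun i => by
    simpa [shufflePerm_castAdd] using congr($h (Fin.castAdd m i))
  have hτ : τ = τ' := Equiv.ext fun j => by
    simpa [shufflePerm_natAdd] using congr($h (Fin.natAdd n j))
  rw [hσ, hτ]

theorem shufflePerm_bijective :
    Function.Bijective fun t : {A : Finset (Fin (n + m)) // #A = n} × Equiv.Perm (Fin n) ×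
      Equiv.Perm (Fin m) => shufflePerm t.1.1 t.1.2 t.2.1 t.2.2 := by
  refine (Fintype.bijective_iff_injective_and_card _).mpr ⟨shufflePerm_injective, ?_⟩
  simp only [Fintype.card_prod, Fintype.card_perm, Fintype.card_fin, Fintype.card_finset_len]
  rw [← Nat.choose_mul_factorial_mul_factorial (Nat.le_add_right n m), Nat.add_sub_cancel_left,
    mul_assoc]

theorem sum_perm_eq_sum_shufflePerm {M : Type*} [AddCommMonoid M]
    (f : Equiv.Perm (Fin (n + m)) → M) :
    ∑ π, f π =
      ∑ A : {A : Finset (Fin (n + m)) // #A = n}, ∑ σ, ∑ τ, f (shufflePerm A.1 A.2 σ τ) := by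
  rw [← Fintype.sum_bijective _ shufflePerm_bijective _ f fun _ => rfl]
  simp only [Fintype.sum_prod_type]

theorem descWord_eq_ofFn {N : ℕ} (σ : Equiv.Perm (Fin (N + 1))) :
    descWord σ = List.ofFn fun k : Fin N => decide (σ k.succ < σ k.castSucc) :=
  rfl

theorem descWord_shufflePerm (A : Finset (Fin (n + 1 + (m + 1)))) (hA : #A = n + 1)
    (σ : Equiv.Perm (Fin (n + 1))) (τ : Equiv.Perm (Fin (m + 1))) :
    descWord (shufflePerm A hA σ τ) = descWord σ ++
      decide (shufflePerm A hA σ τ (Fin.natAdd (n + 1) 0) <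
        shufflePerm A hA σ τ (Fin.castAdd (m + 1) (Fin.last n))) :: descWord τ := by
  rw [descWord_eq_ofFn (N := n + 1 + m), List.ofFn_add, List.ofFn_succ', List.concat_eq_append,
    List.append_assoc, List.singleton_append, descWord_eq_ofFn σ, descWord_eq_ofFn τ]
  congr 2
  · funext i
    exact decide_eq_decide.mpr (shufflePerm_castAdd_lt_iff A hA σ τ i.succ i.castSucc)
  · congr 1
    funext j
    exact decide_eq_decide.mpr (shufflePerm_natAdd_lt_iff A hA σ τ j.succ j.castSucc)

theorem ite_append_false_add_ite_append_true {M : Type*} [AddMonoid M] {ds dt u v : List Bool}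
    (h : ds.length = u.length) (b : Bool) (x : M) :
    ((if ds ++ b :: dt = u ++ false :: v then x else 0) +
        if ds ++ b :: dt = u ++ true :: v then x else 0) =
      if ds = u ∧ dt = v then x else 0 := by
  simp only [List.append_eq_append_iff_of_size_eq_left h, List.cons.injEq]
  cases b <;> simp

section Polynomial

variable (R : Type*) [CommSemiring R]

noncomputable def gaussPoly (n m : ℕ) : R[X] :=
  ∑ A : {A : Finset (Fin (n + m)) // #A = n}, X ^ crossInvNum A.1

noncomputable def invPoly (k : ℕ) : R[X] := ∑ σ : Equiv.Perm (Fin k), X ^ invNum σ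

noncomputable def descPoly (N : ℕ) (w : List Bool) : R[X] :=
  ∑ σ ∈ univ.filter (fun σ : Equiv.Perm (Fin N) => descWord σ = w), X ^ invNum σ

variable {R}

theorem sum_perm_eq_gaussPoly_mul (F : Equiv.Perm (Fin (n + m)) → R[X])
    (f : Equiv.Perm (Fin n) → R[X]) (g : Equiv.Perm (Fin m) → R[X])
    (hF : ∀ A hA σ τ, F (shufflePerm A hA σ τ) = X ^ crossInvNum A * f σ * g τ) :
    ∑ π, F π = gaussPoly R n m * (∑ σ, f σ) * ∑ τ, g τ := by
  rw [sum_perm_eq_sum_shufflePerm, gaussPoly, sum_mul_sum, sum_mul]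
  simp only [hF, sum_mul]
  simp only [mul_sum]

theorem invPoly_add (n m : ℕ) :
    invPoly R (n + m) = gaussPoly R n m * invPoly R n * invPoly R m :=
  sum_perm_eq_gaussPoly_mul _ _ _ fun A hA σ τ => by
    rw [invNum_shufflePerm, pow_add, pow_add]
    ring

theorem gaussPoly_one_left (k : ℕ) : gaussPoly R 1 k = ∑ j ∈ range (1 + k), X ^ j := by
  rw [gaussPoly, ← sum_subtype _ (fun _ => mem_powersetCard_univ) fun A => X ^ crossInvNum A,
    powersetCard_one, sum_map, ← Fin.sum_univ_eq_sum_range]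
  simp only [Function.Embedding.coeFn_mk, crossInvNum_singleton]

theorem invPoly_of_le_one {k : ℕ} (hk : k ≤ 1) : invPoly R k = 1 := by
  have hinv (σ : Equiv.Perm (Fin k)) : invNum σ = 0 := by
    rw [invNum, card_eq_zero, filter_eq_empty_iff]
    rintro ⟨x, y⟩ - ⟨hxy, -⟩
    rw [Fin.lt_def] at hxy
    omega
  simp [invPoly, hinv, Fintype.card_perm, Nat.factorial_eq_one.mpr hk]

theorem descPoly_append_false_add_append_true (u v : List Bool) :
    descPoly R (u.length + 1 + (v.length + 1)) (u ++ false :: v) +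
        descPoly R (u.length + 1 + (v.length + 1)) (u ++ true :: v) =
      gaussPoly R (u.length + 1) (v.length + 1) * descPoly R (u.length + 1) u *
        descPoly R (v.length + 1) v := by
  simp only [descPoly, sum_filter, ← sum_add_distrib]
  refine sum_perm_eq_gaussPoly_mul _ _ _ fun A hA σ τ => ?_
  rw [descWord_shufflePerm, ite_append_false_add_ite_append_true (by simp [descWord]),
    invNum_shufflePerm]
  by_cases hσ : descWord σ = u <;> by_cases hτ : descWord τ = v <;> simp [hσ, hτ, pow_add]
  ring

end Polynomial

theorem invPoly_eq_qFactorial (k : ℕ) : invPoly ℚ k = qFactorial k := by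
  induction k with
  | zero => rw [invPoly_of_le_one zero_le_one, qFactorial, prod_range_zero]
  | succ k ih =>
    rw [qFactorial, prod_range_succ, ← qFactorial, ← ih, Nat.add_comm, invPoly_add,
      gaussPoly_one_left, invPoly_of_le_one le_rfl, Nat.add_comm]
    ring

theorem qFactorial_add (n m : ℕ) :
    qFactorial (n + m) = gaussPoly ℚ n m * qFactorial n * qFactorial m := by
  simp only [← invPoly_eq_qFactorial, invPoly_add]

theorem qFactorial_ne_zero (k : ℕ) : qFactorial k ≠ 0 :=
  (monic_prod_of_monic _ _ fun i _ => monic_geom_sum_X i.succ_ne_zero).ne_zero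

theorem desPoly_eq_descPoly (w : List Bool) (N : ℕ) (h : w.length + 1 = N) :
    desPoly w = descPoly ℚ N w := by
  subst h
  rfl

end MacMahon

open MacMahon

open scoped Polynomial in
/-- MacMahon's Multiplication Theorem (q-analogue): for ab-words `u` of degree `n−1`
and `v` of degree `m−1`, the Gaussian binomial `[n+m choose n]_q` times
`β_q(u)·β_q(v)` equals `β_q(u·a·v) + β_q(u·b·v)`, as rational functions in `q`. -/
theorem stmt_8 (u v : List Bool) :
    (algebraMap (Polynomial ℚ) (RatFunc ℚ) (qFactorial (u.length + 1 + (v.length + 1))) /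
        (algebraMap _ _ (qFactorial (u.length + 1)) *
          algebraMap _ _ (qFactorial (v.length + 1)))) *
        (algebraMap _ _ (desPoly u) * algebraMap _ _ (desPoly v)) =
      algebraMap _ _ (desPoly (u ++ false :: v)) +
        algebraMap _ _ (desPoly (u ++ true :: v)) := by
  have hlen (b : Bool) : (u ++ b :: v).length + 1 = u.length + 1 + (v.length + 1) := by
    simp only [List.length_append, List.length_cons]
    omega
  rw [desPoly_eq_descPoly u _ rfl, desPoly_eq_descPoly v _ rfl,
    desPoly_eq_descPoly _ _ (hlen false), desPoly_eq_descPoly _ _ (hlen true), ← map_add,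
    descPoly_append_false_add_append_true, qFactorial_add]
  have hq (k : ℕ) : algebraMap ℚ[X] (RatFunc ℚ) (qFactorial k) ≠ 0 :=
    RatFunc.algebraMap_ne_zero (qFactorial_ne_zero k)
  simp only [map_mul]
  field_simp [hq]
end

section
/- In a finite lattice L with more than one element, if the join of all atoms is not the top element 1̂, then μ(0̂, 1̂) = 0. -/
attribute [local instance] Classical.propDecidable

noncomputable local instance (priority := low) {α : Type*} [Preorder α] [Fintype α] :
    LocallyFiniteOrder α := Fintype.toLocallyFiniteOrder

open Finset

private noncomputable def atomSup {L : Type*} [Lattice L] [Fintype L] [BoundedOrder L] (x : L) :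
    L := (Finset.univ.filter fun a : L => IsAtom a ∧ a ≤ x).sup id

private lemma atomSup_le {L : Type*} [Lattice L] [Fintype L] [BoundedOrder L] (x : L) :
    atomSup x ≤ x := by
  refine Finset.sup_le fun a ha => ?_
  simp only [Finset.mem_filter] at ha
  exact ha.2.2

private lemma atomSup_mono {L : Type*} [Lattice L] [Fintype L] [BoundedOrder L] {x y : L}
    (hxy : x ≤ y) : atomSup x ≤ atomSup y := by
  refine Finset.sup_le fun a ha => ?_
  simp only [Finset.mem_filter] at ha
  exact Finset.le_sup (f := id) (by simp [Finset.mem_filter, ha.2.1, ha.2.2.trans hxy])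

private lemma atomSup_ne_bot {L : Type*} [Lattice L] [Fintype L] [BoundedOrder L] {x : L}
    (hx : x ≠ ⊥) : atomSup x ≠ ⊥ := by
  obtain ⟨a, ha, hax⟩ := (eq_bot_or_exists_atom_le x).resolve_left hx
  have : a ≤ atomSup x := Finset.le_sup (f := id) (by simp [Finset.mem_filter, ha, hax])
  exact fun hb => ha.1 (le_bot_iff.mp (hb ▸ this))

private lemma key {L : Type*} [Lattice L] [Fintype L] [BoundedOrder L] (x : L)
    (hx : atomSup x < x) : IncidenceAlgebra.mu ℤ (⊥ : L) x = 0 := by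
  induction x using WellFoundedLT.induction with
  | ind x IH =>
    have hxbot : x ≠ ⊥ := fun hx' => by simp [hx', le_bot_iff.mp (hx' ▸ atomSup_le x)] at hx
    rw [IncidenceAlgebra.mu_eq_neg_sum_Ico_of_ne (Ne.symm hxbot), neg_eq_zero]
    have hsplit : ∀ y ∈ Finset.Ico (⊥ : L) x, y ∉ Finset.Icc (⊥ : L) (atomSup x) →
        IncidenceAlgebra.mu ℤ (⊥ : L) y = 0 := by
      intro y hy hy'
      simp only [Finset.mem_Ico, Finset.mem_Icc] at hy hy'
      have hyc : ¬ y ≤ atomSup x := fun h => hy' ⟨bot_le, h⟩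
      have hcy : atomSup y < y := by
        rcases lt_or_eq_of_le (atomSup_le y) with h | h
        · exact h
        · exact absurd (h ▸ atomSup_mono hy.2.le) hyc
      exact IH y hy.2 hcy
    rw [← Finset.sum_subset (Finset.Icc_subset_Ico_right hx) (fun y hy hy' => hsplit y hy hy')]
    rw [IncidenceAlgebra.sum_Icc_mu_right]
    simp [Ne.symm (atomSup_ne_bot hxbot)]

/-- In a finite lattice with more than one element, if the join of all atoms is
not the top element, then `μ(0̂, 1̂) = 0`. -/
theorem stmt_16 (L : Type*) [Lattice L] [Fintype L] [BoundedOrder L] [Nontrivial L]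
    (h : (Finset.univ.filter fun a : L => IsAtom a).sup id ≠ ⊤) :
    IncidenceAlgebra.mu ℤ (⊥ : L) ⊤ = 0 := by
  have heq : atomSup (⊤ : L) = (Finset.univ.filter fun a : L => IsAtom a).sup id := by
    unfold atomSup; congr 1; ext a; simp
  exact key ⊤ (lt_of_le_of_ne (atomSup_le ⊤) (heq ▸ h))
end
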